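/- The function φ₉(p,q) = (p² − 1)/(1 + p²)²·q³ − 3q/(1 + p²) satisfies the equation (1 + p²)φ_pp + 2pq·φ_pq + (1 + q²)φ_qq = 0 for all real p, q. -/

import Mathlib

/-!
Write `φ₉ = u(p) q³ + v(p) q` with `u = (p² - 1)/(1 + p²)²` and `v = -3/(1 + p²)`. Since the
second partials of such a function are again polynomial in `q`, the left-hand side of the equation
is `q³ ((1 + p²) u'' + 6 p u' + 6 u) + q ((1 + p²) v'' + 2 p v' + 6 u)`, and both coefficients
vanish identically once `u', u'', v', v''` are computed by the quotient rule.
-/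

noncomputable def pd₁ (f : ℝ → ℝ → ℝ) : ℝ → ℝ → ℝ := fun p q => deriv (fun x => f x q) p
noncomputable def pd₂ (f : ℝ → ℝ → ℝ) : ℝ → ℝ → ℝ := fun p q => deriv (fun y => f p y) q

section Separable

variable (u v g h : ℝ → ℝ)

theorem pd₁_mul_add_mul (hu : Differentiable ℝ u) (hv : Differentiable ℝ v) :
    pd₁ (fun a b => u a * g b + v a * h b) = fun a b => deriv u a * g b + deriv v a * h b := by
  funext a b
  exact ((hu a).hasDerivAt.mul_const (g b) |>.add ((hv a).hasDerivAt.mul_const (h b))).deriv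

theorem pd₂_mul_add_mul (hg : Differentiable ℝ g) (hh : Differentiable ℝ h) :
    pd₂ (fun a b => u a * g b + v a * h b) = fun a b => u a * deriv g b + v a * deriv h b := by
  funext a b
  exact ((hg b).hasDerivAt.const_mul (u a) |>.add ((hh b).hasDerivAt.const_mul (v a))).deriv

theorem legendre_operator_mul_cube_add_mul (hu : Differentiable ℝ u) (hv : Differentiable ℝ v)
    (hu' : Differentiable ℝ (deriv u)) (hv' : Differentiable ℝ (deriv v)) (p q : ℝ) :
    (1 + p ^ 2) * pd₁ (pd₁ (fun a b => u a * b ^ 3 + v a * b)) p q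
        + 2 * p * q * pd₁ (pd₂ (fun a b => u a * b ^ 3 + v a * b)) p q
        + (1 + q ^ 2) * pd₂ (pd₂ (fun a b => u a * b ^ 3 + v a * b)) p q
      = q ^ 3 * ((1 + p ^ 2) * deriv (deriv u) p + 6 * p * deriv u p + 6 * u p)
        + q * ((1 + p ^ 2) * deriv (deriv v) p + 2 * p * deriv v p + 6 * u p) := by
  have hcube : deriv (fun b : ℝ => b ^ 3) = fun b => 3 * b ^ 2 := by funext b; simp
  have hsq : deriv (fun b : ℝ => 3 * b ^ 2) = fun b => 6 * b :=
    funext fun b => ((hasDerivAt_pow 2 b).const_mul 3 |>.congr_deriv (by norm_num; ring)).deriv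
  rw [pd₁_mul_add_mul u v _ (fun b => b) hu hv, pd₁_mul_add_mul _ _ _ (fun b => b) hu' hv',
    pd₂_mul_add_mul u v _ (fun b => b) (by fun_prop) (by fun_prop), hcube,
    pd₁_mul_add_mul _ _ _ _ hu hv, pd₂_mul_add_mul _ _ _ _ (by fun_prop) (by fun_prop), hsq]
  simp only [deriv_id'', deriv_const']
  ring

end Separable

theorem HasDerivAt.div_one_add_sq_pow {P : ℝ → ℝ} {P' a : ℝ} (hP : HasDerivAt P P' a) (n : ℕ) :
    HasDerivAt (fun x => P x / (1 + x ^ 2) ^ n)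
      ((P' * (1 + a ^ 2) - 2 * n * a * P a) / (1 + a ^ 2) ^ (n + 1)) a := by
  have hbase : HasDerivAt (fun x : ℝ => 1 + x ^ 2) (2 * a) a := by
    simpa using (hasDerivAt_pow 2 a).const_add 1
  have hden : HasDerivAt (fun x : ℝ => (1 + x ^ 2) ^ n) (n * (1 + a ^ 2) ^ (n - 1) * (2 * a)) a :=
    hbase.pow n
  refine (hP.div hden (by positivity)).congr_deriv ?_
  rcases n with _ | n
  · field_simp; simp
  · field_simp
    push_cast
    ring

noncomputable def cubicCoeff (a : ℝ) : ℝ := (a ^ 2 - 1) / (1 + a ^ 2) ^ 2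

noncomputable def linearCoeff (a : ℝ) : ℝ := -3 / (1 + a ^ 2)

theorem hasDerivAt_cubicCoeff (a : ℝ) :
    HasDerivAt cubicCoeff ((6 * a - 2 * a ^ 3) / (1 + a ^ 2) ^ 3) a := by
  have hP : HasDerivAt (fun x : ℝ => x ^ 2 - 1) (2 * a) a := by
    simpa using (hasDerivAt_pow 2 a).sub_const 1
  exact (hP.div_one_add_sq_pow 2).congr_deriv (by ring)

theorem deriv_cubicCoeff : deriv cubicCoeff = fun a => (6 * a - 2 * a ^ 3) / (1 + a ^ 2) ^ 3 :=
  funext fun a => (hasDerivAt_cubicCoeff a).deriv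

theorem hasDerivAt_deriv_cubicCoeff (a : ℝ) :
    HasDerivAt (deriv cubicCoeff) ((6 - 36 * a ^ 2 + 6 * a ^ 4) / (1 + a ^ 2) ^ 4) a := by
  have hP : HasDerivAt (fun x : ℝ => 6 * x - 2 * x ^ 3) (6 - 6 * a ^ 2) a :=
    (((hasDerivAt_id' a).const_mul 6).sub ((hasDerivAt_pow 3 a).const_mul 2)).congr_deriv
      (by push_cast; ring)
  rw [deriv_cubicCoeff]
  exact (hP.div_one_add_sq_pow 3).congr_deriv (by ring)

theorem hasDerivAt_linearCoeff (a : ℝ) : HasDerivAt linearCoeff (6 * a / (1 + a ^ 2) ^ 2) a := by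
  rw [show linearCoeff = fun x => -3 / (1 + x ^ 2) ^ 1 by funext x; rw [pow_one]; rfl]
  exact ((hasDerivAt_const a (-3 : ℝ)).div_one_add_sq_pow 1).congr_deriv (by ring)

theorem deriv_linearCoeff : deriv linearCoeff = fun a => 6 * a / (1 + a ^ 2) ^ 2 :=
  funext fun a => (hasDerivAt_linearCoeff a).deriv

theorem hasDerivAt_deriv_linearCoeff (a : ℝ) :
    HasDerivAt (deriv linearCoeff) ((6 - 18 * a ^ 2) / (1 + a ^ 2) ^ 3) a := by
  have hP : HasDerivAt (fun x : ℝ => 6 * x) 6 a := by simpa using (hasDerivAt_id' a).const_mul 6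
  rw [deriv_linearCoeff]
  exact (hP.div_one_add_sq_pow 2).congr_deriv (by ring)

theorem phi_solves_legendre_eq :
    ∀ p q : ℝ,
      (1 + p ^ 2) * pd₁ (pd₁ (fun a b => (a ^ 2 - 1) / (1 + a ^ 2) ^ 2 * b ^ 3 - 3 * b / (1 + a ^ 2))) p q
        + 2 * p * q * pd₁ (pd₂ (fun a b => (a ^ 2 - 1) / (1 + a ^ 2) ^ 2 * b ^ 3 - 3 * b / (1 + a ^ 2))) p q
        + (1 + q ^ 2) * pd₂ (pd₂ (fun a b => (a ^ 2 - 1) / (1 + a ^ 2) ^ 2 * b ^ 3 - 3 * b / (1 + a ^ 2))) p q = 0 := by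
  intro p q
  have hφ : (fun a b : ℝ => (a ^ 2 - 1) / (1 + a ^ 2) ^ 2 * b ^ 3 - 3 * b / (1 + a ^ 2))
      = fun a b => cubicCoeff a * b ^ 3 + linearCoeff a * b := by
    funext a b
    simp only [cubicCoeff, linearCoeff]
    ring
  rw [hφ, legendre_operator_mul_cube_add_mul _ _ (fun a => (hasDerivAt_cubicCoeff a).differentiableAt)
    (fun a => (hasDerivAt_linearCoeff a).differentiableAt)
    (fun a => (hasDerivAt_deriv_cubicCoeff a).differentiableAt)
    (fun a => (hasDerivAt_deriv_linearCoeff a).differentiableAt),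
    (hasDerivAt_deriv_cubicCoeff p).deriv, (hasDerivAt_cubicCoeff p).deriv,
    (hasDerivAt_deriv_linearCoeff p).deriv, (hasDerivAt_linearCoeff p).deriv, cubicCoeff]
  field_simp
  ring
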